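/- Let H be a simple bipartite graph on at least six vertices with color classes A and B satisfying |A| = |B|. Then the following statements are equivalent: (i) H is a brace; (ii) |N(S)| ≥ |S| + 2 for every nonempty subset S of A with |S| < |A| − 1; (iii) H − {a1, a2, b1, b2} has a perfect matching for any four distinct vertices with a1, a2 ∈ A and b1, b2 ∈ B. -/

import Mathlib

/-! Preamble: definitions for matching covered graphs, bricks, removable
doubletons, R-compatible/R-thin edges, retracts, ladders, partial biwheels,
R-configurations, and the eleven infinite families. -/

/-- The graph has a perfect matching. -/
def HasPerfMatching {V : Type*} (G : SimpleGraph V) : Prop :=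
  ∃ M : G.Subgraph, M.IsPerfectMatching

/-- A graph (with at least two vertices) is matching covered if it is connected
and each of its edges lies in some perfect matching. -/
def MatchingCovered {V : Type*} (G : SimpleGraph V) : Prop :=
  2 ≤ Nat.card V ∧ G.Connected ∧
    ∀ e ∈ G.edgeSet, ∃ M : G.Subgraph, M.IsPerfectMatching ∧ e ∈ M.edgeSet

/-- An edge of a matching covered graph is removable if deleting it leaves a
matching covered graph. -/
def RemovableEdge {V : Type*} (G : SimpleGraph V) (e : Sym2 V) : Prop :=
  e ∈ G.edgeSet ∧ MatchingCovered (G.deleteEdges {e})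

/-- The number of odd connected components. -/
noncomputable def oddCompCount {V : Type*} (G : SimpleGraph V) : ℕ :=
  Nat.card {c : G.ConnectedComponent // Odd (Nat.card c.supp)}

/-- `S` is a barrier of `G`: `S` is nonempty and the number of odd components
of `G − S` equals `|S|`. -/
def IsBarrierOf {V : Type*} (G : SimpleGraph V) (S : Set V) : Prop :=
  S.Nonempty ∧ oddCompCount (G.induce (Sᶜ : Set V)) = S.ncard

/-- Bicritical: at least four vertices, and deleting any two distinct vertices
leaves a graph with a perfect matching. -/
def BicriticalGraph {V : Type*} (G : SimpleGraph V) : Prop :=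
  4 ≤ Nat.card V ∧ ∀ u v : V, u ≠ v →
    HasPerfMatching (G.induce (({u, v} : Set V)ᶜ))

/-- 3-connected: at least four vertices, and deleting any set of at most two
vertices leaves a connected graph. -/
def ThreeConnectedGraph {V : Type*} (G : SimpleGraph V) : Prop :=
  4 ≤ Nat.card V ∧ ∀ S : Set V, S.ncard ≤ 2 → (G.induce (Sᶜ : Set V)).Connected

/-- A brick is a 3-connected bicritical graph. -/
def BrickGraph {V : Type*} (G : SimpleGraph V) : Prop :=
  ThreeConnectedGraph G ∧ BicriticalGraph G

/-- `A`, `B` form a bipartition of `G`. -/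
def BipartitionOf {V : Type*} (G : SimpleGraph V) (A B : Set V) : Prop :=
  A ∪ B = Set.univ ∧ Disjoint A B ∧ ∀ ⦃u v : V⦄, G.Adj u v → (u ∈ A ↔ v ∈ B)

/-- `G` is bipartite. -/
def BipartiteGraph {V : Type*} (G : SimpleGraph V) : Prop :=
  ∃ A B : Set V, BipartitionOf G A B

/-- `{α, β}` is a removable doubleton of `G`: a pair of distinct edges whose
deletion leaves a bipartite matching covered graph. -/
def RemovableDoubleton {V : Type*} (G : SimpleGraph V) (α β : Sym2 V) : Prop :=
  α ≠ β ∧ α ∈ G.edgeSet ∧ β ∈ G.edgeSet ∧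
    BipartiteGraph (G.deleteEdges {α, β}) ∧ MatchingCovered (G.deleteEdges {α, β})

/-- An `R`-brick: a brick with a fixed removable doubleton `R = {α, β}`. -/
def RBrick {V : Type*} (G : SimpleGraph V) (α β : Sym2 V) : Prop :=
  BrickGraph G ∧ RemovableDoubleton G α β

/-- `V(R)`: the set of the four ends of the doubleton edges. -/
def VR {V : Type*} (α β : Sym2 V) : Set V := {v | v ∈ α ∨ v ∈ β}

/-- `e` is `R`-compatible: it is an edge of `H := G − R` and is removable in
both `G` and `H`. -/
def RCompatible {V : Type*} (G : SimpleGraph V) (α β e : Sym2 V) : Prop :=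
  e ∈ (G.deleteEdges {α, β}).edgeSet ∧
    MatchingCovered (G.deleteEdges {e}) ∧
    MatchingCovered ((G.deleteEdges {α, β}).deleteEdges {e})

/-- `e` is `R`-thin: `R`-compatible, and every barrier of `G − e` has at most
two vertices. -/
def RThin {V : Type*} (G : SimpleGraph V) (α β e : Sym2 V) : Prop :=
  RCompatible G α β e ∧
    ∀ S : Set V, IsBarrierOf (G.deleteEdges {e}) S → S.ncard ≤ 2

/-- The number of maximal nontrivial barriers of a graph. -/
noncomputable def barrierIndex {V : Type*} (G : SimpleGraph V) : ℕ :=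
  Set.ncard {S : Set V | IsBarrierOf G S ∧ 2 ≤ S.ncard ∧
    ∀ T : Set V, IsBarrierOf G T → S ⊆ T → T = S}

/-- Degree of a vertex (as the cardinality of its neighbourhood). -/
noncomputable def degOf {V : Type*} (G : SimpleGraph V) (v : V) : ℕ :=
  (G.neighborSet v).ncard

/-- The relation identifying each degree-two vertex with its neighbours
(bicontraction of all degree-two vertices at once). -/
def bicontractPairRel {V : Type*} (G : SimpleGraph V) (u v : V) : Prop :=
  G.Adj u v ∧ (degOf G u = 2 ∨ degOf G v = 2)

/-- The vertex identifications performed when taking the retract. -/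
def retractSetoid {V : Type*} (G : SimpleGraph V) : Setoid V :=
  Relation.EqvGen.setoid (bicontractPairRel G)

/-- The retract of `G` (as a simple graph on the quotient). -/
def retractGraph {V : Type*} (G : SimpleGraph V) :
    SimpleGraph (Quotient (retractSetoid G)) where
  Adj X Y := X ≠ Y ∧ ∃ u v : V,
    Quotient.mk (retractSetoid G) u = X ∧ Quotient.mk (retractSetoid G) v = Y ∧ G.Adj u v
  symm := by
    constructor
    rintro X Y ⟨hne, u, v, hu, hv, huv⟩
    exact ⟨hne.symm, v, u, hv, hu, huv.symm⟩
  loopless := by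
    constructor
    rintro X ⟨hne, -⟩
    exact hne rfl

/-- The retract of `G` has a pair of parallel edges. -/
def retractHasParallel {V : Type*} (G : SimpleGraph V) : Prop :=
  ∃ p q p' q' : V, G.Adj p q ∧ G.Adj p' q' ∧ s(p, q) ≠ s(p', q') ∧
    ¬ Relation.EqvGen (bicontractPairRel G) p q ∧
    ((Relation.EqvGen (bicontractPairRel G) p p' ∧
        Relation.EqvGen (bicontractPairRel G) q q') ∨
     (Relation.EqvGen (bicontractPairRel G) p q' ∧
        Relation.EqvGen (bicontractPairRel G) q p'))

/-- `e` is strictly `R`-thin: `R`-thin and the retract of `G − e` has no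
parallel edges. -/
def StrictlyRThin {V : Type*} (G : SimpleGraph V) (α β e : Sym2 V) : Prop :=
  RThin G α β e ∧ ¬ retractHasParallel (G.deleteEdges {e})

/-- The ladder with `m` rungs: two paths `x₀…x_{m-1}` (first coordinate `0`)
and `y₀…y_{m-1}` (first coordinate `1`) together with the rungs `xᵢyᵢ`. -/
def ladderGraph (m : ℕ) : SimpleGraph (Fin 2 × Fin m) :=
  SimpleGraph.fromRel (fun p q =>
    (p.1 = q.1 ∧ p.2.val + 1 = q.2.val) ∨ (p.1 ≠ q.1 ∧ p.2 = q.2))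

/-- The partial biwheel on the odd path `x₀…x_{2k-1}` (the `inl` vertices)
with hubs `u = inr 0` (joined to the even-indexed path vertices) and
`w = inr 1` (joined to the odd-indexed path vertices). -/
def biwheelGraph (k : ℕ) : SimpleGraph (Fin (2 * k) ⊕ Fin 2) :=
  SimpleGraph.fromRel (fun p q =>
    match p, q with
    | Sum.inl i, Sum.inl j => i.val + 1 = j.val
    | Sum.inr h, Sum.inl i => (h = 0 ∧ i.val % 2 = 0) ∨ (h = 1 ∧ i.val % 2 = 1)
    | _, _ => False)

/-- The subgraph `K` of `Γ` is a ladder with `m` rungs and corners `a u b w`: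
`au` and `bw` are its external rungs, labelled according to the convention
that `a` and `w` lie in one colour class and `b` and `u` in the other. -/
def LadderOn {W : Type*} (Γ : SimpleGraph W) (K : Γ.Subgraph) (m : ℕ)
    (a u b w : W) : Prop :=
  ∃ (hm : 3 ≤ m) (φ : ladderGraph m ≃g K.coe),
    (φ ((0 : Fin 2), (⟨0, by omega⟩ : Fin m))).val = a ∧
    (φ ((1 : Fin 2), (⟨0, by omega⟩ : Fin m))).val = u ∧
    (if m % 2 = 1 then
        (φ ((0 : Fin 2), (⟨m - 1, by omega⟩ : Fin m))).val = w ∧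
        (φ ((1 : Fin 2), (⟨m - 1, by omega⟩ : Fin m))).val = b
      else
        (φ ((1 : Fin 2), (⟨m - 1, by omega⟩ : Fin m))).val = w ∧
        (φ ((0 : Fin 2), (⟨m - 1, by omega⟩ : Fin m))).val = b)

/-- The subgraph `K` of `Γ` is a partial biwheel (parameter `k`, order `2k+2`)
with ends `a`, `b` and hubs `u`, `w`; its external spokes are `au` and `bw`. -/
def BiwheelOn {W : Type*} (Γ : SimpleGraph W) (K : Γ.Subgraph) (k : ℕ)
    (a u b w : W) : Prop :=
  ∃ (hk : 2 ≤ k) (φ : biwheelGraph k ≃g K.coe),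
    (φ (Sum.inl (⟨0, by omega⟩ : Fin (2 * k)))).val = a ∧
    (φ (Sum.inl (⟨2 * k - 1, by omega⟩ : Fin (2 * k)))).val = b ∧
    (φ (Sum.inr 0)).val = u ∧
    (φ (Sum.inr 1)).val = w

/-- Truncated biwheel: a spanning partial biwheel plus the edges `aw`, `bu`. -/
def IsTruncatedBiwheel {V : Type*} (G : SimpleGraph V) : Prop :=
  ∃ (K : G.Subgraph) (k : ℕ) (a u b w : V),
    BiwheelOn G K k a u b w ∧ K.verts = Set.univ ∧
    G.edgeSet = K.edgeSet ∪ {s(a, w), s(b, u)}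

/-- Prism: a spanning odd ladder plus the edges `aw`, `bu`. -/
def IsPrism {V : Type*} (G : SimpleGraph V) : Prop :=
  ∃ (K : G.Subgraph) (m : ℕ) (a u b w : V),
    Odd m ∧ LadderOn G K m a u b w ∧ K.verts = Set.univ ∧
    G.edgeSet = K.edgeSet ∪ {s(a, w), s(b, u)}

/-- Möbius ladder: a spanning even ladder plus the edges `aw`, `bu`;
by convention `K₄` is also a Möbius ladder. -/
def IsMobiusLadder {V : Type*} (G : SimpleGraph V) : Prop :=
  (∃ (K : G.Subgraph) (m : ℕ) (a u b w : V),
    Even m ∧ LadderOn G K m a u b w ∧ K.verts = Set.univ ∧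
    G.edgeSet = K.edgeSet ∪ {s(a, w), s(b, u)}) ∨
  Nonempty (G ≃g (⊤ : SimpleGraph (Fin 4)))

/-- Staircase: a ladder plus two new vertices `a₂`, `b₂` and the five edges
`a a₂`, `u a₂`, `b b₂`, `w b₂`, `a₂ b₂`. -/
def IsStaircase {V : Type*} (G : SimpleGraph V) : Prop :=
  ∃ (K : G.Subgraph) (m : ℕ) (a u b w a2 b2 : V),
    LadderOn G K m a u b w ∧
    a2 ∉ K.verts ∧ b2 ∉ K.verts ∧ a2 ≠ b2 ∧
    K.verts ∪ {a2, b2} = Set.univ ∧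
    G.edgeSet = K.edgeSet ∪ {s(a, a2), s(u, a2), s(b, b2), s(w, b2), s(a2, b2)}

/-- Pseudo-biwheel: a partial biwheel of order at least eight plus two new
vertices `a₂`, `b₂` and the five edges `a a₂`, `u a₂`, `b b₂`, `w b₂`,
`a₂ b₂`. -/
def IsPseudoBiwheel {V : Type*} (G : SimpleGraph V) : Prop :=
  ∃ (K : G.Subgraph) (k : ℕ) (a u b w a2 b2 : V),
    3 ≤ k ∧ BiwheelOn G K k a u b w ∧
    a2 ∉ K.verts ∧ b2 ∉ K.verts ∧ a2 ≠ b2 ∧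
    K.verts ∪ {a2, b2} = Set.univ ∧
    G.edgeSet = K.edgeSet ∪ {s(a, a2), s(u, a2), s(b, b2), s(w, b2), s(a2, b2)}

/-- Double biwheel of type I: two partial biwheels sharing precisely their
hubs `u`, `w`, plus the edges `a₁a₂` and `b₁b₂`. -/
def IsDoubleBiwheelI {V : Type*} (G : SimpleGraph V) : Prop :=
  ∃ (K1 K2 : G.Subgraph) (k1 k2 : ℕ) (a1 b1 a2 b2 u w : V),
    BiwheelOn G K1 k1 a1 u b1 w ∧ BiwheelOn G K2 k2 a2 u b2 w ∧
    K1.verts ∩ K2.verts = {u, w} ∧ K1.verts ∪ K2.verts = Set.univ ∧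
    G.edgeSet = K1.edgeSet ∪ K2.edgeSet ∪ {s(a1, a2), s(b1, b2)}

/-- Double ladder of type I. -/
def IsDoubleLadderI {V : Type*} (G : SimpleGraph V) : Prop :=
  ∃ (K1 K2 : G.Subgraph) (m1 m2 : ℕ) (a1 b1 a2 b2 u w : V),
    LadderOn G K1 m1 a1 u b1 w ∧ LadderOn G K2 m2 a2 u b2 w ∧
    K1.verts ∩ K2.verts = {u, w} ∧ K1.verts ∪ K2.verts = Set.univ ∧
    G.edgeSet = K1.edgeSet ∪ K2.edgeSet ∪ {s(a1, a2), s(b1, b2)}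

/-- Laddered biwheel of type I. -/
def IsLadderedBiwheelI {V : Type*} (G : SimpleGraph V) : Prop :=
  ∃ (K1 K2 : G.Subgraph) (k1 m2 : ℕ) (a1 b1 a2 b2 u w : V),
    BiwheelOn G K1 k1 a1 u b1 w ∧ LadderOn G K2 m2 a2 u b2 w ∧
    K1.verts ∩ K2.verts = {u, w} ∧ K1.verts ∪ K2.verts = Set.univ ∧
    G.edgeSet = K1.edgeSet ∪ K2.edgeSet ∪ {s(a1, a2), s(b1, b2)}

/-- Double biwheel of type II: two vertex-disjoint partial biwheels of order
at least eight plus the four edges `a₁a₂`, `b₁b₂`, `u₁w₂`, `w₁u₂`. -/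
def IsDoubleBiwheelII {V : Type*} (G : SimpleGraph V) : Prop :=
  ∃ (K1 K2 : G.Subgraph) (k1 k2 : ℕ) (a1 u1 b1 w1 a2 u2 b2 w2 : V),
    3 ≤ k1 ∧ 3 ≤ k2 ∧
    BiwheelOn G K1 k1 a1 u1 b1 w1 ∧ BiwheelOn G K2 k2 a2 u2 b2 w2 ∧
    K1.verts ∩ K2.verts = ∅ ∧ K1.verts ∪ K2.verts = Set.univ ∧
    G.edgeSet = K1.edgeSet ∪ K2.edgeSet ∪
      {s(a1, a2), s(b1, b2), s(u1, w2), s(w1, u2)}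

/-- Double ladder of type II. -/
def IsDoubleLadderII {V : Type*} (G : SimpleGraph V) : Prop :=
  ∃ (K1 K2 : G.Subgraph) (m1 m2 : ℕ) (a1 u1 b1 w1 a2 u2 b2 w2 : V),
    LadderOn G K1 m1 a1 u1 b1 w1 ∧ LadderOn G K2 m2 a2 u2 b2 w2 ∧
    K1.verts ∩ K2.verts = ∅ ∧ K1.verts ∪ K2.verts = Set.univ ∧
    G.edgeSet = K1.edgeSet ∪ K2.edgeSet ∪
      {s(a1, a2), s(b1, b2), s(u1, w2), s(w1, u2)}

/-- Laddered biwheel of type II. -/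
def IsLadderedBiwheelII {V : Type*} (G : SimpleGraph V) : Prop :=
  ∃ (K1 K2 : G.Subgraph) (k1 m2 : ℕ) (a1 u1 b1 w1 a2 u2 b2 w2 : V),
    3 ≤ k1 ∧
    BiwheelOn G K1 k1 a1 u1 b1 w1 ∧ LadderOn G K2 m2 a2 u2 b2 w2 ∧
    K1.verts ∩ K2.verts = ∅ ∧ K1.verts ∪ K2.verts = Set.univ ∧
    G.edgeSet = K1.edgeSet ∪ K2.edgeSet ∪
      {s(a1, a2), s(b1, b2), s(u1, w2), s(w1, u2)}

/-- Membership in one of the eleven infinite families. -/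
def InEleven {V : Type*} (G : SimpleGraph V) : Prop :=
  IsTruncatedBiwheel G ∨ IsPrism G ∨ IsMobiusLadder G ∨ IsStaircase G ∨
  IsPseudoBiwheel G ∨ IsDoubleBiwheelI G ∨ IsDoubleLadderI G ∨
  IsLadderedBiwheelI G ∨ IsDoubleBiwheelII G ∨ IsDoubleLadderII G ∨
  IsLadderedBiwheelII G

/-- An `R`-ladder configuration: a subgraph `K` of `H := G − R` which is a
ladder with external rungs `au` and `bw` (free corners `u`, `w`) such that
every vertex of `K` except possibly `u` and `w` is cubic in `G`, the corners
`a` and `b` lie in `V(R)`, and every internal rung is an `R`-thin edge of `G`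
whose index is two. -/
def RLadderConfig {V : Type*} (G : SimpleGraph V) (α β : Sym2 V)
    (K : (G.deleteEdges {α, β}).Subgraph) (a u b w : V) : Prop :=
  ∃ (m : ℕ) (hm : 3 ≤ m) (φ : ladderGraph m ≃g K.coe),
    (φ ((0 : Fin 2), (⟨0, by omega⟩ : Fin m))).val = a ∧
    (φ ((1 : Fin 2), (⟨0, by omega⟩ : Fin m))).val = u ∧
    (if m % 2 = 1 then
        (φ ((0 : Fin 2), (⟨m - 1, by omega⟩ : Fin m))).val = w ∧
        (φ ((1 : Fin 2), (⟨m - 1, by omega⟩ : Fin m))).val = b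
      else
        (φ ((1 : Fin 2), (⟨m - 1, by omega⟩ : Fin m))).val = w ∧
        (φ ((0 : Fin 2), (⟨m - 1, by omega⟩ : Fin m))).val = b) ∧
    (∀ v ∈ K.verts, v ≠ u → v ≠ w → degOf G v = 3) ∧
    a ∈ VR α β ∧ b ∈ VR α β ∧
    (∀ i : Fin m, 0 < i.val → i.val < m - 1 →
      RThin G α β s((φ ((0 : Fin 2), i)).val, (φ ((1 : Fin 2), i)).val) ∧
      barrierIndex
        (G.deleteEdges {s((φ ((0 : Fin 2), i)).val, (φ ((1 : Fin 2), i)).val)}) = 2)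

/-- An `R`-biwheel configuration: a subgraph `K` of `H := G − R` which is a
partial biwheel with external spokes `au` and `bw` (hubs `u`, `w`) such that
the hubs are not cubic in `G`, every other vertex of `K` is cubic in `G`, the
ends `a` and `b` lie in `V(R)`, and every internal spoke is an `R`-thin edge
of `G` whose index is one. -/
def RBiwheelConfig {V : Type*} (G : SimpleGraph V) (α β : Sym2 V)
    (K : (G.deleteEdges {α, β}).Subgraph) (a u b w : V) : Prop :=
  ∃ (k : ℕ) (hk : 2 ≤ k) (φ : biwheelGraph k ≃g K.coe),
    (φ (Sum.inl (⟨0, by omega⟩ : Fin (2 * k)))).val = a ∧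
    (φ (Sum.inl (⟨2 * k - 1, by omega⟩ : Fin (2 * k)))).val = b ∧
    (φ (Sum.inr 0)).val = u ∧
    (φ (Sum.inr 1)).val = w ∧
    degOf G u ≠ 3 ∧ degOf G w ≠ 3 ∧
    (∀ v ∈ K.verts, v ≠ u → v ≠ w → degOf G v = 3) ∧
    a ∈ VR α β ∧ b ∈ VR α β ∧
    (∀ e ∈ K.edgeSet, (u ∈ e ∨ w ∈ e) → e ≠ s(a, u) → e ≠ s(b, w) →
      RThin G α β e ∧ barrierIndex (G.deleteEdges {e}) = 1)

/-- An `R`-configuration: an `R`-ladder or an `R`-biwheel, with free corners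
`u` and `w`. -/
def RConfig {V : Type*} (G : SimpleGraph V) (α β : Sym2 V)
    (K : (G.deleteEdges {α, β}).Subgraph) (a u b w : V) : Prop :=
  RLadderConfig G α β K a u b w ∨ RBiwheelConfig G α β K a u b w

/-- A 4-cycle on the four (distinct) vertices `v0 v1 v2 v3`. -/
def Is4Cycle {V : Type*} (H : SimpleGraph V) (v0 v1 v2 v3 : V) : Prop :=
  v0 ≠ v1 ∧ v0 ≠ v2 ∧ v0 ≠ v3 ∧ v1 ≠ v2 ∧ v1 ≠ v3 ∧ v2 ≠ v3 ∧
  H.Adj v0 v1 ∧ H.Adj v1 v2 ∧ H.Adj v2 v3 ∧ H.Adj v3 v0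

/-- The cut `∂(X)`. -/
def edgeCutOf {V : Type*} (G : SimpleGraph V) (X : Set V) : Set (Sym2 V) :=
  {e | e ∈ G.edgeSet ∧ ∃ p q : V, e = s(p, q) ∧ p ∈ X ∧ q ∉ X}

/-- The cut `∂(X)` is tight: every perfect matching contains exactly one of
its edges. -/
def TightCut {V : Type*} (G : SimpleGraph V) (X : Set V) : Prop :=
  ∀ M : G.Subgraph, M.IsPerfectMatching → (M.edgeSet ∩ edgeCutOf G X).ncard = 1

/-- A brace: a bipartite matching covered graph with no nontrivial tight cut. -/
def IsBrace {V : Type*} (G : SimpleGraph V) : Prop :=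
  BipartiteGraph G ∧ MatchingCovered G ∧
    ¬ ∃ X : Set V, 2 ≤ X.ncard ∧ 2 ≤ Xᶜ.ncard ∧ TightCut G X

/-!
(ii) ⇔ (iii) is Hall's theorem for `A \ {a₁, a₂}` against `B \ {b₁, b₂}`.

For the brace part, let `f` be the partner map of a perfect matching. Then
`|A ∩ X| - |B ∩ X|` is the number of vertices of `A ∩ X` that `f` sends out of `X` minus the
number of such vertices in `B ∩ X`. For `X = S ∪ N(S)` with `S ⊆ A` this says that every perfect
matching has exactly `|N(S)| - |S|` edges in `∂(X)`; so a set `S` violating (ii) has surplus one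
(surplus zero is excluded because `∂(X)` contains an edge, which lies in a perfect matching), and
`∂(X)` is then a nontrivial tight cut. Conversely, if `∂(X)` is a nontrivial tight cut, one shore,
say `X`, has `|A ∩ X| = |B ∩ X| + 1` and every edge of the cut leaves `X` from `A`; then
`S = A \ X` has `N(S) ⊆ B \ X`, a set of size `|S| + 1`, contrary to (ii).
-/

namespace SimpleGraph

variable {V : Type*} {G : SimpleGraph V}

def neighborhood (G : SimpleGraph V) (S : Set V) : Set V := {v | ∃ x ∈ S, G.Adj x v}

lemma neighborhood_mono {S T : Set V} (h : S ⊆ T) : G.neighborhood S ⊆ G.neighborhood T :=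
  fun _ ⟨x, hx, hxv⟩ => ⟨x, h hx, hxv⟩

lemma Connected.exists_adj_mem_notMem (hG : G.Connected) {X : Set V} {u v : V} (hu : u ∈ X)
    (hv : v ∉ X) : ∃ p q, G.Adj p q ∧ p ∈ X ∧ q ∉ X := by
  obtain ⟨d, -, hd₁, hd₂⟩ := (hG u v).some.exists_boundary_dart X hu hv
  exact ⟨d.fst, d.snd, d.adj, hd₁, hd₂⟩

namespace Subgraph

variable {M : G.Subgraph}

lemma IsPerfectMatching.exists_involutive (hM : M.IsPerfectMatching) :
    ∃ f : V → V, Function.Involutive f ∧ ∀ v w, M.Adj v w ↔ f v = w := by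
  choose f hf huniq using isPerfectMatching_iff.1 hM
  have hiff : ∀ v w, M.Adj v w ↔ f v = w :=
    fun v w => ⟨fun h => (huniq v w h).symm, fun h => h ▸ hf v⟩
  exact ⟨f, fun v => (hiff _ _).1 (hf v).symm, hiff⟩

lemma IsMatching.ncard_le_ncard_neighborhood_inter [Finite V] (hM : M.IsMatching) {S : Set V}
    (hS : S ⊆ M.verts) : S.ncard ≤ (G.neighborhood S ∩ M.verts).ncard := by
  choose! f hf using fun v (hv : v ∈ M.verts) => (hM hv).exists
  refine Set.ncard_le_ncard_of_injOn f (fun x hx => ?_) (fun x hx y hy hxy => ?_)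
  · exact ⟨⟨x, hx, M.adj_sub (hf x (hS hx))⟩, M.edge_vert (hf x (hS hx)).symm⟩
  · exact hM.eq_of_adj_right (hf x (hS hx)) (hxy ▸ hf y (hS hy))

end Subgraph

lemma hasPerfMatching_induce_iff {s : Set V} :
    HasPerfMatching (G.induce s) ↔ ∃ M : G.Subgraph, M.IsMatching ∧ M.verts = s := by
  constructor
  · rintro ⟨M, hM⟩
    refine ⟨M.map (Embedding.induce s).toHom, hM.1.map _ Subtype.val_injective, ?_⟩
    simp [hM.2.verts_eq_univ, Embedding.induce, Embedding.comap]
  · rintro ⟨M, hM, rfl⟩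
    refine ⟨M.comap (Embedding.induce M.verts).toHom, Subgraph.isPerfectMatching_iff.2 ?_⟩
    rintro ⟨v, hv⟩
    obtain ⟨w, hvw, huniq⟩ := hM hv
    refine ⟨⟨w, M.edge_vert hvw.symm⟩, ⟨M.adj_sub hvw, hvw⟩, ?_⟩
    intro w' hw'
    exact Subtype.ext (huniq w' hw'.2)

lemma exists_isPerfectMatching_adj {a b : V} (hab : G.Adj a b)
    (h : HasPerfMatching (G.induce ({a, b} : Set V)ᶜ)) :
    ∃ M : G.Subgraph, M.IsPerfectMatching ∧ M.Adj a b := by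
  obtain ⟨M, hM, hMv⟩ := hasPerfMatching_induce_iff.1 h
  refine ⟨M ⊔ G.subgraphOfAdj hab, ⟨hM.sup (.subgraphOfAdj hab) ?_, ?_⟩, .inr (by simp)⟩
  · rw [hM.support_eq_verts, (Subgraph.IsMatching.subgraphOfAdj hab).support_eq_verts, hMv]
    exact disjoint_compl_left
  · rw [Subgraph.isSpanning_iff, Subgraph.verts_sup, hMv, subgraphOfAdj_verts,
      Set.compl_union_self]

lemma hasPerfMatching_induce_union [Finite V] {A B : Set V} (hd : Disjoint A B)
    (hcard : A.ncard = B.ncard) (hall : ∀ S ⊆ A, S.ncard ≤ (G.neighborhood S ∩ B).ncard) :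
    HasPerfMatching (G.induce (A ∪ B)) := by
  classical
  have := Fintype.ofFinite V
  have hnbr : ∀ S ⊆ A, ⋃ x ∈ S, (G.between A B).neighborSet x = G.neighborhood S ∩ B := by
    intro S hS
    ext v
    simp only [Set.mem_iUnion, mem_neighborSet, between_adj, neighborhood, Set.mem_inter_iff,
      Set.mem_ofPred_eq, exists_prop]
    constructor
    · rintro ⟨x, hx, hxv, ⟨-, hv⟩ | ⟨hxB, -⟩⟩
      · exact ⟨⟨x, hx, hxv⟩, hv⟩
      · exact (hd.notMem_of_mem_left (hS hx) hxB).elim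
    · rintro ⟨⟨x, hx, hxv⟩, hv⟩
      exact ⟨x, hx, hxv, .inl ⟨hS hx, hv⟩⟩
  obtain ⟨M, hAM, hM⟩ := exists_isMatching_of_forall_ncard_le (between_isBipartiteWith hd)
    fun S hS => hnbr S hS ▸ hall S hS
  have hMAB : M.verts ⊆ A ∪ B := by
    intro v hv
    obtain ⟨w, hvw, -⟩ := hM hv
    exact (isBipartiteWith_support_subset (between_isBipartiteWith hd)) ⟨w, M.adj_sub hvw⟩
  have hBM : B ⊆ M.verts := by
    have hle : A.ncard ≤ (B ∩ M.verts).ncard := by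
      refine (hM.ncard_le_ncard_neighborhood_inter hAM).trans (Set.ncard_le_ncard ?_)
      rintro v ⟨⟨x, hx, -, h | h⟩, hv⟩
      · exact ⟨h.2, hv⟩
      · exact (hd.notMem_of_mem_left hx h.1).elim
    exact Set.inter_eq_left.1 (Set.eq_of_subset_of_ncard_le Set.inter_subset_left (hcard ▸ hle))
  refine hasPerfMatching_induce_iff.2 ⟨M.map (Hom.ofLE between_le), hM.map_ofLE between_le, ?_⟩
  simpa using hMAB.antisymm (Set.union_subset hAM hBM)

end SimpleGraph

lemma Function.Involutive.ncard_inter_add_ncard_inter_sdiff_preimage {V : Type*} [Finite V]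
    {f : V → V} (hf : Function.Involutive f) {A B : Set V} (hA : f ⁻¹' A = B) (X : Set V) :
    (A ∩ X).ncard + (B ∩ (X \ f ⁻¹' X)).ncard = (B ∩ X).ncard + (A ∩ (X \ f ⁻¹' X)).ncard := by
  have himage : f '' (A ∩ X ∩ f ⁻¹' X) = B ∩ X ∩ f ⁻¹' X := by
    rw [hf.image_eq_preimage_symm, Set.preimage_inter, Set.preimage_inter, hA,
      ← Set.preimage_comp, hf.comp_self, Set.preimage_id, Set.inter_right_comm]
  have hpaired := Set.ncard_image_of_injective (A ∩ X ∩ f ⁻¹' X) hf.injective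
  rw [himage] at hpaired
  have hA' := Set.ncard_inter_add_ncard_sdiff_eq_ncard (A ∩ X) (f ⁻¹' X)
  have hB' := Set.ncard_inter_add_ncard_sdiff_eq_ncard (B ∩ X) (f ⁻¹' X)
  rw [Set.inter_sdiff_assoc] at hA' hB'
  omega

lemma edgeCutOf_compl {V : Type*} (G : SimpleGraph V) (X : Set V) :
    edgeCutOf G Xᶜ = edgeCutOf G X := by
  ext e
  constructor <;>
  · rintro ⟨he, p, q, rfl, hp, hq⟩
    exact ⟨he, q, p, Sym2.eq_swap, by simpa using hq, by simpa using hp⟩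

lemma TightCut.compl {V : Type*} {G : SimpleGraph V} {X : Set V} (h : TightCut G X) :
    TightCut G Xᶜ := by
  simpa only [TightCut, edgeCutOf_compl] using h

lemma SimpleGraph.Subgraph.ncard_edgeSet_inter_edgeCutOf {V : Type*} {G : SimpleGraph V}
    {M : G.Subgraph} {f : V → V} (hf : ∀ v w, M.Adj v w ↔ f v = w) (X : Set V) :
    (M.edgeSet ∩ edgeCutOf G X).ncard = (X \ f ⁻¹' X).ncard := by
  have hcut : M.edgeSet ∩ edgeCutOf G X = (fun v => s(v, f v)) '' (X \ f ⁻¹' X) := by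
    ext e
    constructor
    · rintro ⟨he, -, p, q, rfl, hp, hq⟩
      obtain rfl := (hf p q).1 he
      exact ⟨p, ⟨hp, hq⟩, rfl⟩
    · rintro ⟨v, ⟨hv, hfv⟩, rfl⟩
      have hadj := (hf v (f v)).2 rfl
      exact ⟨hadj, M.adj_sub hadj, v, f v, rfl, hv, hfv⟩
  rw [hcut, Set.InjOn.ncard_image]
  rintro v ⟨hv, -⟩ w ⟨-, hfw⟩ hvw
  rcases Sym2.eq_iff.1 hvw with ⟨h, -⟩ | ⟨rfl, -⟩
  · exact h
  · exact (hfw hv).elim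

namespace BipartitionOf

variable {V : Type*} {H : SimpleGraph V} {A B : Set V}

lemma symm (h : BipartitionOf H A B) : BipartitionOf H B A :=
  ⟨by rw [Set.union_comm, h.1], h.2.1.symm, fun _ _ huv => (h.2.2 huv.symm).symm⟩

lemma compl_eq (h : BipartitionOf H A B) : Aᶜ = B :=
  IsCompl.compl_eq ⟨h.2.1, codisjoint_iff.2 h.1⟩

lemma mem_right_iff (h : BipartitionOf H A B) {v : V} : v ∈ B ↔ v ∉ A := by
  rw [← h.compl_eq, Set.mem_compl_iff]

lemma mem_right_of_adj (h : BipartitionOf H A B) {u v : V} (huv : H.Adj u v) (hu : u ∈ A) :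
    v ∈ B :=
  (h.2.2 huv).1 hu

lemma neighborhood_subset (h : BipartitionOf H A B) {S : Set V} (hS : S ⊆ A) :
    H.neighborhood S ⊆ B :=
  fun _ ⟨_, hx, hxv⟩ => h.mem_right_of_adj hxv (hS hx)

lemma preimage_eq (h : BipartitionOf H A B) {f : V → V} (hf : ∀ v, H.Adj v (f v)) :
    f ⁻¹' A = B := by
  ext v
  exact h.2.2 (hf v).symm

lemma ncard_add_ncard [Finite V] (h : BipartitionOf H A B) : A.ncard + B.ncard = Nat.card V := by
  rw [← h.compl_eq, Set.ncard_add_ncard_compl]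

lemma ncard_inter_add_ncard_inter [Finite V] (h : BipartitionOf H A B) (X : Set V) :
    (A ∩ X).ncard + (B ∩ X).ncard = X.ncard := by
  rw [← h.compl_eq, Set.inter_comm, Set.inter_comm Aᶜ, ← Set.sdiff_eq,
    Set.ncard_inter_add_ncard_sdiff_eq_ncard]

end BipartitionOf

lemma Set.exists_subset_ncard_eq_and_subset_or_superset {α : Type*} {s t : Set α} (hst : s ⊆ t)
    {n : ℕ} (hn : n ≤ t.ncard) : ∃ u ⊆ t, u.ncard = n ∧ (s ⊆ u ∨ u ⊆ s) := by
  by_cases hs : n ≤ s.ncard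
  · obtain ⟨u, hus, hu⟩ := Set.exists_subset_card_eq hs
    exact ⟨u, hus.trans hst, hu, .inr hus⟩
  · obtain ⟨u, hsu, hut, hu⟩ := Set.exists_subsuperset_card_eq hst (by omega) hn
    exact ⟨u, hut, hu, .inl hsu⟩

section Surplus

variable {V : Type*} [Finite V] {H : SimpleGraph V} {A B : Set V}

/-- Condition (ii): every nonempty `S ⊆ A` with `|S| < |A| - 1` has surplus `|N(S)| - |S| ≥ 2`. -/
def HasSurplusTwo (H : SimpleGraph V) (A : Set V) : Prop :=
  ∀ S ⊆ A, S.Nonempty → S.ncard + 1 < A.ncard → S.ncard + 2 ≤ (H.neighborhood S).ncard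

lemma HasSurplusTwo.succ_le_ncard_neighborhood (h : HasSurplusTwo H A) (hA : 3 ≤ A.ncard)
    {S : Set V} (hSA : S ⊆ A) (hS : S.Nonempty) (hSlt : S.ncard < A.ncard) :
    S.ncard + 1 ≤ (H.neighborhood S).ncard := by
  by_cases hSlt' : S.ncard + 1 < A.ncard
  · linarith [h S hSA hS hSlt']
  obtain ⟨T, hTS, hT⟩ := Set.exists_subset_card_eq (show S.ncard - 1 ≤ S.ncard by omega)
  have hTne : T.Nonempty := Set.nonempty_of_ncard_ne_zero (by omega)
  have hNT := h T (hTS.trans hSA) hTne (by omega)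
  have := Set.ncard_le_ncard (SimpleGraph.neighborhood_mono (G := H) hTS)
  omega

lemma hasPerfMatching_induce_compl_union (hbip : BipartitionOf H A B) (hAB : A.ncard = B.ncard)
    {P Q : Set V} (hP : P ⊆ A) (hQ : Q ⊆ B) (hPQ : P.ncard = Q.ncard)
    (hsurplus : ∀ S ⊆ A \ P, S.Nonempty → S.ncard + Q.ncard ≤ (H.neighborhood S).ncard) :
    HasPerfMatching (H.induce (P ∪ Q)ᶜ) := by
  have hset : (P ∪ Q)ᶜ = (A \ P) ∪ (B \ Q) := by
    rw [← hbip.compl_eq] at hQ ⊢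
    ext v
    simp only [Set.mem_compl_iff, Set.mem_union, Set.mem_sdiff]
    have := @hQ v
    tauto
  rw [hset]
  refine SimpleGraph.hasPerfMatching_induce_union (hbip.2.1.mono Set.sdiff_subset Set.sdiff_subset)
    (by rw [Set.ncard_sdiff hP, Set.ncard_sdiff hQ, hAB, hPQ]) fun S hS => ?_
  obtain rfl | hSne := S.eq_empty_or_nonempty
  · simp
  rw [← Set.inter_sdiff_assoc,
    Set.inter_eq_left.2 (hbip.neighborhood_subset (hS.trans Set.sdiff_subset))]
  have := Set.le_ncard_sdiff Q (H.neighborhood S)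
  have := hsurplus S hS hSne
  omega

lemma HasSurplusTwo.hasPerfMatching_induce (hbip : BipartitionOf H A B)
    (hAB : A.ncard = B.ncard) (h : HasSurplusTwo H A) {a₁ a₂ b₁ b₂ : V} (ha₁ : a₁ ∈ A)
    (ha₂ : a₂ ∈ A) (hb₁ : b₁ ∈ B) (hb₂ : b₂ ∈ B) (ha : a₁ ≠ a₂) (hb : b₁ ≠ b₂) :
    HasPerfMatching (H.induce ({a₁, a₂, b₁, b₂} : Set V)ᶜ) := by
  have hP : {a₁, a₂} ⊆ A := Set.pair_subset ha₁ ha₂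
  rw [show ({a₁, a₂, b₁, b₂} : Set V) = {a₁, a₂} ∪ {b₁, b₂} by
    rw [Set.insert_union, Set.singleton_union]]
  refine hasPerfMatching_induce_compl_union hbip hAB hP (Set.pair_subset hb₁ hb₂)
    (by rw [Set.ncard_pair ha, Set.ncard_pair hb]) fun S hS hSne => ?_
  have := Set.ncard_le_ncard hS
  rw [Set.ncard_sdiff hP, Set.ncard_pair ha] at this
  have := hSne.ncard_pos
  rw [Set.ncard_pair hb]
  exact h S (hS.trans Set.sdiff_subset) hSne (by omega)

lemma hasSurplusTwo_of_forall_hasPerfMatching_induce (hbip : BipartitionOf H A B)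
    (hAB : A.ncard = B.ncard)
    (h : ∀ a₁ a₂ b₁ b₂ : V, a₁ ∈ A → a₂ ∈ A → b₁ ∈ B → b₂ ∈ B → a₁ ≠ a₂ → b₁ ≠ b₂ →
      HasPerfMatching (H.induce ({a₁, a₂, b₁, b₂} : Set V)ᶜ)) :
    HasSurplusTwo H A := by
  intro S hSA hSne hSlt
  by_contra! hN
  have hNB := hbip.neighborhood_subset hSA
  obtain ⟨P, hP, hP2⟩ := Set.exists_subset_card_eq (s := A \ S) (n := 2)
    (by rw [Set.ncard_sdiff hSA]; omega)
  obtain ⟨a₁, a₂, ha, rfl⟩ := Set.ncard_eq_two.1 hP2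
  obtain ⟨Q, hQB, hQ2, hNQ⟩ :=
    Set.exists_subset_ncard_eq_and_subset_or_superset hNB (n := 2) (by omega)
  obtain ⟨b₁, b₂, hb, rfl⟩ := Set.ncard_eq_two.1 hQ2
  obtain ⟨ha₁, ha₂⟩ := Set.pair_subset_iff.1 hP
  obtain ⟨hb₁, hb₂⟩ := Set.pair_subset_iff.1 hQB
  obtain ⟨M, hM, hMv⟩ := SimpleGraph.hasPerfMatching_induce_iff.1
    (h a₁ a₂ b₁ b₂ ha₁.1 ha₂.1 hb₁ hb₂ ha hb)
  have hSM : S ⊆ M.verts := by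
    rw [hMv]
    rintro x hx (rfl | rfl | rfl | rfl)
    exacts [ha₁.2 hx, ha₂.2 hx, hbip.mem_right_iff.1 hb₁ (hSA hx),
      hbip.mem_right_iff.1 hb₂ (hSA hx)]
  have hle : S.ncard ≤ (H.neighborhood S \ {b₁, b₂}).ncard := by
    refine (hM.ncard_le_ncard_neighborhood_inter hSM).trans (Set.ncard_le_ncard ?_)
    rintro v ⟨hv, hvM⟩
    exact ⟨hv, fun hb => hMv ▸ hvM <| by rcases hb with rfl | rfl <;> simp⟩
  have := hSne.ncard_pos
  rcases hNQ with hNQ | hQN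
  · rw [Set.sdiff_eq_empty.2 hNQ, Set.ncard_empty] at hle
    omega
  · rw [Set.ncard_sdiff hQN, Set.ncard_pair hb] at hle
    omega

lemma HasSurplusTwo.reachable (hbip : BipartitionOf H A B) (hAB : A.ncard = B.ncard)
    (hA : 3 ≤ A.ncard) (h : HasSurplusTwo H A) {a a' : V} (ha : a ∈ A) (ha' : a' ∈ A) :
    H.Reachable a a' := by
  by_contra hnot
  set R := {x ∈ A | H.Reachable a x}
  have hRA : R ⊆ A := Set.sep_subset _ _
  have hdisj : Disjoint (H.neighborhood R) (H.neighborhood (A \ R)) := by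
    rw [Set.disjoint_left]
    rintro v ⟨r, hr, hrv⟩ ⟨t, ht, htv⟩
    exact ht.2 ⟨ht.1, hr.2.trans (hrv.reachable.trans htv.reachable.symm)⟩
  have hR := h.succ_le_ncard_neighborhood hA hRA ⟨a, ha, .rfl⟩
    (Set.ncard_lt_ncard ⟨hRA, fun hAR => hnot (hAR ha').2⟩)
  have hT := h.succ_le_ncard_neighborhood hA (S := A \ R) Set.sdiff_subset
    ⟨a', ha', fun h => hnot h.2⟩
    (Set.ncard_lt_ncard (Set.sdiff_ssubset_left_iff.2 ⟨a, ha, ha, .rfl⟩))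
  have hsplit := Set.ncard_sdiff_add_ncard_of_subset hRA
  have hNB : (H.neighborhood R ∪ H.neighborhood (A \ R)).ncard ≤ B.ncard :=
    Set.ncard_le_ncard (Set.union_subset (hbip.neighborhood_subset hRA)
      (hbip.neighborhood_subset Set.sdiff_subset))
  rw [Set.ncard_union_eq hdisj] at hNB
  omega

lemma HasSurplusTwo.connected (hbip : BipartitionOf H A B) (hAB : A.ncard = B.ncard)
    (hA : 3 ≤ A.ncard) (h : HasSurplusTwo H A) : H.Connected := by
  obtain ⟨a, ha⟩ : A.Nonempty := Set.nonempty_of_ncard_ne_zero (by omega)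
  have hreach : ∀ v, H.Reachable a v := by
    intro v
    by_cases hv : v ∈ A
    · exact h.reachable hbip hAB hA ha hv
    obtain ⟨S, hSA, hS⟩ := Set.exists_subset_card_eq (show A.ncard - 2 ≤ A.ncard by omega)
    have hN := h S hSA (Set.nonempty_of_ncard_ne_zero (by omega)) (by omega)
    have hNB : H.neighborhood S = B :=
      Set.eq_of_subset_of_ncard_le (hbip.neighborhood_subset hSA) (by omega)
    obtain ⟨x, hx, hxv⟩ : v ∈ H.neighborhood S := hNB ▸ hbip.mem_right_iff.2 hv
    exact (h.reachable hbip hAB hA ha (hSA hx)).trans hxv.reachable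
  exact (SimpleGraph.connected_iff H).2 ⟨fun u v => (hreach u).symm.trans (hreach v), ⟨a⟩⟩

lemma HasSurplusTwo.exists_isPerfectMatching_adj (hbip : BipartitionOf H A B)
    (hAB : A.ncard = B.ncard) (hA : 3 ≤ A.ncard) (h : HasSurplusTwo H A) {p q : V}
    (hpq : H.Adj p q) : ∃ M : H.Subgraph, M.IsPerfectMatching ∧ M.Adj p q := by
  wlog hp : p ∈ A generalizing p q
  · obtain ⟨M, hM, hqp⟩ := this hpq.symm ((hbip.2.2 hpq.symm).2 (hbip.mem_right_iff.2 hp))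
    exact ⟨M, hM, hqp.symm⟩
  refine SimpleGraph.exists_isPerfectMatching_adj hpq ?_
  rw [← Set.singleton_union]
  refine hasPerfMatching_induce_compl_union hbip hAB (Set.singleton_subset_iff.2 hp)
    (Set.singleton_subset_iff.2 (hbip.mem_right_of_adj hpq hp)) (by simp) fun S hS hSne => ?_
  rw [Set.ncard_singleton]
  exact h.succ_le_ncard_neighborhood hA (hS.trans Set.sdiff_subset) hSne
    (Set.ncard_lt_ncard (hS.trans_ssubset (Set.sdiff_singleton_ssubset.2 hp)))

end Surplus

section TightCut

variable {V : Type*} [Finite V] {H : SimpleGraph V} {A B : Set V}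

lemma BipartitionOf.ncard_edgeSet_inter_edgeCutOf_add_ncard (hbip : BipartitionOf H A B)
    {M : H.Subgraph} (hM : M.IsPerfectMatching) {S : Set V} (hSA : S ⊆ A) :
    (M.edgeSet ∩ edgeCutOf H (S ∪ H.neighborhood S)).ncard + S.ncard =
      (H.neighborhood S).ncard := by
  obtain ⟨f, hf, hfM⟩ := hM.exists_involutive
  have hadj : ∀ v, H.Adj v (f v) := fun v => M.adj_sub ((hfM v _).2 rfl)
  have hNB := hbip.neighborhood_subset hSA
  set X := S ∪ H.neighborhood S
  have hAX : A ∩ X = S := by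
    rw [Set.inter_union_distrib_left, Set.inter_eq_right.2 hSA,
      (hbip.2.1.mono_right hNB).inter_eq, Set.union_empty]
  have hBX : B ∩ X = H.neighborhood S := by
    rw [Set.inter_union_distrib_left, Set.inter_eq_right.2 hNB,
      (hbip.2.1.symm.mono_right hSA).inter_eq, Set.empty_union]
  have hcrossA : A ∩ (X \ f ⁻¹' X) = ∅ := by
    rw [← Set.inter_sdiff_assoc, hAX]
    exact Set.sdiff_eq_empty.2 fun x hx => .inr ⟨x, hx, hadj x⟩
  have hbal := hf.ncard_inter_add_ncard_inter_sdiff_preimage (hbip.preimage_eq hadj) X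
  have hsplit := hbip.ncard_inter_add_ncard_inter (X \ f ⁻¹' X)
  rw [hAX, hBX, hcrossA, Set.ncard_empty] at hbal
  rw [hcrossA, Set.ncard_empty] at hsplit
  rw [SimpleGraph.Subgraph.ncard_edgeSet_inter_edgeCutOf hfM]
  omega

lemma BipartitionOf.ncard_inter_eq_succ_of_tightCut (hbip : BipartitionOf H A B) {X : Set V}
    (ht : TightCut H X) {M : H.Subgraph} (hM : M.IsPerfectMatching) {p q : V} (hpq : M.Adj p q)
    (hp : p ∈ X) (hq : q ∉ X) (hpA : p ∈ A) : (A ∩ X).ncard = (B ∩ X).ncard + 1 := by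
  obtain ⟨f, hf, hfM⟩ := hM.exists_involutive
  have hadj : ∀ v, H.Adj v (f v) := fun v => M.adj_sub ((hfM v _).2 rfl)
  have hcross : X \ f ⁻¹' X = {p} := by
    have hone := ht M hM
    rw [SimpleGraph.Subgraph.ncard_edgeSet_inter_edgeCutOf hfM] at hone
    obtain ⟨x, hx⟩ := Set.ncard_eq_one.1 hone
    have hpx : p ∈ X \ f ⁻¹' X := ⟨hp, by rwa [Set.mem_preimage, (hfM p q).1 hpq]⟩
    rw [hx, Set.mem_singleton_iff] at hpx
    rw [hx, hpx]
  have hbal := hf.ncard_inter_add_ncard_inter_sdiff_preimage (hbip.preimage_eq hadj) X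
  rw [hcross, Set.inter_singleton_eq_empty.2 (hbip.mem_right_iff.not_left.2 hpA),
    Set.inter_singleton_of_mem hpA] at hbal
  simp only [Set.ncard_empty, Set.ncard_singleton] at hbal
  omega

lemma HasSurplusTwo.false_of_tightCut (hbip : BipartitionOf H A B) (hAB : A.ncard = B.ncard)
    (h : HasSurplusTwo H A)
    (hpm : ∀ p q, H.Adj p q → ∃ M : H.Subgraph, M.IsPerfectMatching ∧ M.Adj p q) {X : Set V}
    (hX : 2 ≤ X.ncard) (hXc : 2 ≤ Xᶜ.ncard) (ht : TightCut H X) {M : H.Subgraph}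
    (hM : M.IsPerfectMatching) {p q : V} (hpq : M.Adj p q) (hp : p ∈ X) (hq : q ∉ X)
    (hpA : p ∈ A) : False := by
  have hbal := hbip.ncard_inter_eq_succ_of_tightCut ht hM hpq hp hq hpA
  have hNS : H.neighborhood (A \ X) ⊆ B \ X := by
    rintro v ⟨x, ⟨hxA, hxX⟩, hxv⟩
    have hvB := hbip.mem_right_of_adj hxv hxA
    refine ⟨hvB, fun hvX => ?_⟩
    obtain ⟨M', hM', hvx⟩ := hpm v x hxv.symm
    have := hbip.symm.ncard_inter_eq_succ_of_tightCut ht hM' hvx hvX hxX hvB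
    omega
  have hsplitX := hbip.ncard_inter_add_ncard_inter X
  have hsplitXc := hbip.ncard_inter_add_ncard_inter Xᶜ
  rw [← Set.sdiff_eq, ← Set.sdiff_eq] at hsplitXc
  have hsplitA := Set.ncard_inter_add_ncard_sdiff_eq_ncard A X
  have hsplitB := Set.ncard_inter_add_ncard_sdiff_eq_ncard B X
  have hN := h (A \ X) Set.sdiff_subset (Set.nonempty_of_ncard_ne_zero (by omega)) (by omega)
  have := Set.ncard_le_ncard hNS
  omega

lemma HasSurplusTwo.isBrace (hbip : BipartitionOf H A B) (hAB : A.ncard = B.ncard)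
    (hA : 3 ≤ A.ncard) (h : HasSurplusTwo H A) : IsBrace H := by
  have hpm := fun p q (hpq : H.Adj p q) => h.exists_isPerfectMatching_adj hbip hAB hA hpq
  have hconn := h.connected hbip hAB hA
  refine ⟨⟨A, B, hbip⟩, ⟨by have := hbip.ncard_add_ncard; omega, hconn, ?_⟩, ?_⟩
  · intro e he
    induction e using Sym2.ind with
    | h p q => exact hpm p q he
  · rintro ⟨X, hX, hXc, ht⟩
    obtain ⟨u, hu⟩ := Set.nonempty_of_ncard_ne_zero (by omega : X.ncard ≠ 0)
    obtain ⟨v, hv⟩ := Set.nonempty_of_ncard_ne_zero (by omega : Xᶜ.ncard ≠ 0)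
    obtain ⟨p, q, hpq, hp, hq⟩ := hconn.exists_adj_mem_notMem hu hv
    obtain ⟨M, hM, hMpq⟩ := hpm p q hpq
    by_cases hpA : p ∈ A
    · exact h.false_of_tightCut hbip hAB hpm hX hXc ht hM hMpq hp hq hpA
    · exact h.false_of_tightCut hbip hAB hpm hXc (by rwa [compl_compl]) ht.compl hM hMpq.symm
        hq (by simpa using hp) ((hbip.2.2 hpq.symm).2 (hbip.mem_right_iff.2 hpA))

lemma IsBrace.hasSurplusTwo (hbip : BipartitionOf H A B) (h : IsBrace H) : HasSurplusTwo H A := by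
  obtain ⟨-, ⟨-, hconn, hpm⟩, hnt⟩ := h
  intro S hSA hSne hSlt
  by_contra! hN
  have hNB := hbip.neighborhood_subset hSA
  set X := S ∪ H.neighborhood S
  have hASX : A \ S ⊆ Xᶜ :=
    fun v hv hvX => hvX.elim hv.2 fun hvN => hbip.2.1.notMem_of_mem_left hv.1 (hNB hvN)
  have hAS : 2 ≤ (A \ S).ncard := by rw [Set.ncard_sdiff hSA]; omega
  obtain ⟨a, ha⟩ := Set.nonempty_of_ncard_ne_zero (by omega : (A \ S).ncard ≠ 0)
  have hS := hSne.ncard_pos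
  obtain ⟨s, hs⟩ := hSne
  obtain ⟨p, q, hpq, hp, hq⟩ := hconn.exists_adj_mem_notMem (Or.inl hs : s ∈ X) (hASX ha)
  obtain ⟨M, hM, hpqM⟩ := hpm s(p, q) hpq
  have hcut : (M.edgeSet ∩ edgeCutOf H X).Nonempty := ⟨s(p, q), hpqM, hpq, p, q, rfl, hp, hq⟩
  have := hcut.ncard_pos
  have hcount : ∀ M : H.Subgraph, M.IsPerfectMatching →
      (M.edgeSet ∩ edgeCutOf H X).ncard + S.ncard = (H.neighborhood S).ncard :=
    fun _ hM => hbip.ncard_edgeSet_inter_edgeCutOf_add_ncard hM hSA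
  have := hcount M hM
  refine hnt ⟨X, ?_, ?_, fun M' hM' => ?_⟩
  · rw [Set.ncard_union_eq (hbip.2.1.mono hSA hNB)]
    omega
  · have := Set.ncard_le_ncard hASX
    omega
  · have := hcount M' hM'
    omega

end TightCut

/-- characterizations of braces. -/
theorem stmt15 {V : Type*} [Fintype V] (H : SimpleGraph V) (A B : Set V)
    (hbip : BipartitionOf H A B) (hAB : A.ncard = B.ncard)
    (hcard : 6 ≤ Nat.card V) :
    (IsBrace H ↔
      (∀ S : Set V, S ⊆ A → S.Nonempty → S.ncard + 1 < A.ncard →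
        S.ncard + 2 ≤ Set.ncard {v : V | ∃ x ∈ S, H.Adj x v})) ∧
    ((∀ S : Set V, S ⊆ A → S.Nonempty → S.ncard + 1 < A.ncard →
        S.ncard + 2 ≤ Set.ncard {v : V | ∃ x ∈ S, H.Adj x v}) ↔
      (∀ a1 a2 b1 b2 : V, a1 ∈ A → a2 ∈ A → b1 ∈ B → b2 ∈ B →
        a1 ≠ a2 → b1 ≠ b2 →
        HasPerfMatching (H.induce (({a1, a2, b1, b2} : Set V)ᶜ)))) := by
  have hA : 3 ≤ A.ncard := by
    have := hbip.ncard_add_ncard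
    omega
  exact ⟨⟨IsBrace.hasSurplusTwo hbip, HasSurplusTwo.isBrace hbip hAB hA⟩,
    fun h _ _ _ _ => HasSurplusTwo.hasPerfMatching_induce hbip hAB h,
    hasSurplusTwo_of_forall_hasPerfMatching_induce hbip hAB⟩
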